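/- arXiv:2408.16243 — 5 statements merged into one kernel-verified Lean document; each statement's English description precedes it below -/
import Mathlib

section
/- For the Gaussian-type scaled kernel, there exists a constant C independent of δ such that for all y, z ∈ ℝⁿ, ∫_Ω R_δ(x,y) R_δ(x,z) dx ≤ C R_{2√2 δ}(y,z), i.e., the product of two shifted kernels integrated in x is dominated by a kernel of horizon scaled by 2√2. -/
open MeasureTheory Set

/-- The scaled kernel `R_δ(x,y) = α δ^{-n} R(|x-y|²/(4δ²))`. -/
noncomputable def scaledKernel (n : ℕ) (α δ : ℝ) (R : ℝ → ℝ)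
    (x y : EuclideanSpace ℝ (Fin n)) : ℝ :=
  α / δ ^ n * R (‖x - y‖ ^ 2 / (4 * δ ^ 2))

/-!
`R_δ(·, y)` is supported in the closed ball of radius `2δ` about `y` and bounded by `α δ⁻ⁿ M`,
so the integral is at most `vol(B(y, 2δ)) (α δ⁻ⁿ M)² = O(δ⁻ⁿ)`, and it vanishes unless
`‖y - z‖ ≤ 4δ`. In that case the argument of `R` in `R_{2√2δ}(y, z)` is at most `1/2`, where
`R ≥ γ₀`, so `R_{2√2δ}(y, z) ≥ α (2√2δ)⁻ⁿ γ₀`, which is of the same order `δ⁻ⁿ`.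
-/
theorem setIntegral_le_measureReal_mul_of_le_indicator {X : Type*} [MeasurableSpace X]
    {μ : Measure X} {f : X → ℝ} {s t : Set X} {c : ℝ} (hs : MeasurableSet s) (hμs : μ s ≠ ⊤)
    (hf₀ : 0 ≤ f) (hf : f ≤ s.indicator fun _ ↦ c) :
    ∫ x in t, f x ∂μ ≤ μ.real s * c := by
  have hg : Integrable (s.indicator fun _ ↦ c) μ :=
    (integrableOn_const hμs).integrable_indicator hs
  calc ∫ x in t, f x ∂μ ≤ ∫ x in t, s.indicator (fun _ ↦ c) x ∂μ :=
        integral_mono_of_nonneg (.of_forall hf₀) hg.restrict (.of_forall hf)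
    _ ≤ ∫ x, s.indicator (fun _ ↦ c) x ∂μ :=
        setIntegral_le_integral hg (.of_forall fun x ↦ (hf₀ x).trans (hf x))
    _ = μ.real s * c := integral_indicator_const c hs

theorem measureReal_unitClosedBall_pos (n : ℕ) :
    0 < volume.real (Metric.closedBall (0 : EuclideanSpace ℝ (Fin n)) 1) :=
  ENNReal.toReal_pos (Metric.measure_closedBall_pos _ _ one_pos).ne' measure_closedBall_lt_top.ne

namespace scaledKernel

variable {n : ℕ} {α δ : ℝ} {R : ℝ → ℝ} {x y z : EuclideanSpace ℝ (Fin n)}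

theorem nonneg (hα : 0 ≤ α) (hδ : 0 ≤ δ) (hR : ∀ r, 0 ≤ R r) : 0 ≤ scaledKernel n α δ R x y :=
  mul_nonneg (by positivity) (hR _)

theorem le_div_pow_mul {M : ℝ} (hα : 0 ≤ α) (hδ : 0 ≤ δ) (hM : ∀ r, R r ≤ M) :
    scaledKernel n α δ R x y ≤ α / δ ^ n * M :=
  mul_le_mul_of_nonneg_left (hM _) (by positivity)

theorem eq_zero_of_lt_norm (hsupp : ∀ r, 1 < r → R r = 0) (hδ : 0 < δ) (h : 2 * δ < ‖x - y‖) :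
    scaledKernel n α δ R x y = 0 := by
  have hr : 1 < ‖x - y‖ ^ 2 / (4 * δ ^ 2) := by
    rw [lt_div_iff₀ (by positivity)]
    nlinarith
  rw [scaledKernel, hsupp _ hr, mul_zero]

theorem div_pow_mul_le_of_norm_le {γ₀ : ℝ} (hα : 0 ≤ α) (hδ : 0 < δ)
    (hnd : ∀ r ∈ Icc (0 : ℝ) (1 / 2), γ₀ ≤ R r) (h : ‖x - y‖ ≤ Real.sqrt 2 * δ) :
    α / δ ^ n * γ₀ ≤ scaledKernel n α δ R x y := by
  refine mul_le_mul_of_nonneg_left (hnd _ ⟨by positivity, ?_⟩) (by positivity)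
  rw [div_le_iff₀ (by positivity)]
  have h2 : (Real.sqrt 2 * δ) ^ 2 = 2 * δ ^ 2 := by
    rw [mul_pow, Real.sq_sqrt zero_le_two]
  nlinarith [pow_le_pow_left₀ (norm_nonneg _) h 2]

theorem mul_eq_zero_of_lt_norm (hsupp : ∀ r, 1 < r → R r = 0) (hδ : 0 < δ)
    (h : 4 * δ < ‖y - z‖) : scaledKernel n α δ R x y * scaledKernel n α δ R x z = 0 := by
  rcases le_or_gt ‖x - y‖ (2 * δ) with hxy | hxy
  · refine mul_eq_zero_of_right _ (eq_zero_of_lt_norm hsupp hδ ?_)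
    have := norm_sub_le_norm_sub_add_norm_sub y x z
    rw [norm_sub_rev y x] at this
    linarith
  · exact mul_eq_zero_of_left (eq_zero_of_lt_norm hsupp hδ hxy) _

theorem mul_le_indicator {M : ℝ} (hα : 0 ≤ α) (hδ : 0 < δ) (hR : ∀ r, 0 ≤ R r)
    (hM : ∀ r, R r ≤ M) (hsupp : ∀ r, 1 < r → R r = 0) :
    (fun x ↦ scaledKernel n α δ R x y * scaledKernel n α δ R x z) ≤
      (Metric.closedBall y (2 * δ)).indicator fun _ ↦ (α / δ ^ n * M) ^ 2 := by
  intro x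
  dsimp only
  by_cases hx : x ∈ Metric.closedBall y (2 * δ)
  · rw [indicator_of_mem hx, sq]
    exact mul_le_mul (le_div_pow_mul hα hδ.le hM) (le_div_pow_mul hα hδ.le hM)
      (nonneg hα hδ.le hR) ((nonneg (x := x) (y := y) hα hδ.le hR).trans (le_div_pow_mul hα hδ.le hM))
  · rw [indicator_of_notMem hx, eq_zero_of_lt_norm hsupp hδ, zero_mul]
    simpa [dist_eq_norm] using hx

end scaledKernel

theorem stmt8_general (n : ℕ) (Ω : Set (EuclideanSpace ℝ (Fin n)))
    (R : ℝ → ℝ) (α M γ₀ : ℝ) (hα : 0 < α)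
    (hR : ∀ r, 0 ≤ R r) (hM : ∀ r, R r ≤ M)
    (hsupp : ∀ r, 1 < r → R r = 0)
    (hγ : 0 < γ₀) (hnd : ∀ r ∈ Icc (0:ℝ) (1/2), γ₀ ≤ R r) :
    ∃ C : ℝ, 0 < C ∧ ∀ δ : ℝ, 0 < δ →
      ∀ y z : EuclideanSpace ℝ (Fin n),
        (∫ x in Ω, scaledKernel n α δ R x y * scaledKernel n α δ R x z)
          ≤ C * scaledKernel n α (2 * Real.sqrt 2 * δ) R y z := by
  set V := volume.real (Metric.closedBall (0 : EuclideanSpace ℝ (Fin n)) 1) with hV_def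
  have hV : 0 < V := measureReal_unitClosedBall_pos n
  have hM₀ : 0 < M := hγ.trans_le ((hnd 0 (by norm_num)).trans (hM 0))
  have hsqrt : Real.sqrt 2 * Real.sqrt 2 = 2 := Real.mul_self_sqrt zero_le_two
  refine ⟨α * M ^ 2 * (4 * Real.sqrt 2) ^ n * V / γ₀, by positivity, fun δ hδ y z ↦ ?_⟩
  rcases le_or_gt ‖y - z‖ (4 * δ) with hyz | hyz
  · have hyz' : ‖y - z‖ ≤ Real.sqrt 2 * (2 * Real.sqrt 2 * δ) := by
      refine hyz.trans_eq ?_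
      linear_combination -2 * δ * hsqrt
    calc (∫ x in Ω, scaledKernel n α δ R x y * scaledKernel n α δ R x z)
        ≤ volume.real (Metric.closedBall y (2 * δ)) * (α / δ ^ n * M) ^ 2 :=
          setIntegral_le_measureReal_mul_of_le_indicator Metric.isClosed_closedBall.measurableSet
            measure_closedBall_lt_top.ne
            (fun x ↦ mul_nonneg (scaledKernel.nonneg hα.le hδ.le hR)
              (scaledKernel.nonneg hα.le hδ.le hR))
            (scaledKernel.mul_le_indicator hα.le hδ hR hM hsupp)
      _ = α * M ^ 2 * (4 * Real.sqrt 2) ^ n * V / γ₀ * (α / (2 * Real.sqrt 2 * δ) ^ n * γ₀) := by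
          rw [Measure.addHaar_real_closedBall' _ _ (by positivity), finrank_euclideanSpace_fin,
            ← hV_def, show (4 : ℝ) = 2 * 2 by norm_num]
          simp only [mul_pow]
          field_simp
      _ ≤ α * M ^ 2 * (4 * Real.sqrt 2) ^ n * V / γ₀ *
            scaledKernel n α (2 * Real.sqrt 2 * δ) R y z := by
          gcongr
          exact scaledKernel.div_pow_mul_le_of_norm_le hα.le (by positivity) hnd hyz'
  · simp only [scaledKernel.mul_eq_zero_of_lt_norm hsupp hδ hyz, integral_zero]
    exact mul_nonneg (by positivity) (scaledKernel.nonneg hα.le (by positivity) hR)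

/-- `∫_Ω R_δ(x,y) R_δ(x,z) dx ≤ C R_{2√2 δ}(y,z)`. -/
theorem stmt8 (n : ℕ) (Ω : Set (EuclideanSpace ℝ (Fin n)))
    (hΩm : MeasurableSet Ω)
    (R : ℝ → ℝ) (α M γ₀ : ℝ) (hα : 0 < α)
    (hR : ∀ r, 0 ≤ R r) (hM : ∀ r, R r ≤ M)
    (hmono : AntitoneOn R (Ici 0))
    (hsupp : ∀ r, 1 < r → R r = 0)
    (hγ : 0 < γ₀) (hnd : ∀ r ∈ Icc (0:ℝ) (1/2), γ₀ ≤ R r) :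
    ∃ C : ℝ, 0 < C ∧ ∀ δ : ℝ, 0 < δ →
      ∀ y z : EuclideanSpace ℝ (Fin n),
        (∫ x in Ω, scaledKernel n α δ R x y * scaledKernel n α δ R x z)
          ≤ C * scaledKernel n α (2 * Real.sqrt 2 * δ) R y z :=
  stmt8_general n Ω R α M γ₀ hα hR hM hsupp hγ hnd
end

section
/- Let Ω = [a₁,b₁] × [a₂,b₂] ⊂ ℝ² and Ω_δ = {x ∈ Ω : dist(x, ∂Ω) ≤ δ}. Then for every u ∈ H¹(Ω) with trace in L²(∂Ω), ‖u‖²_{L²(Ω_δ)} ≤ C δ ‖u‖²_{H¹(Ω)}, where C depends only on Ω. -/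
/-!
On a segment `[a, b]`, the fundamental theorem of calculus applied to `g²` gives
`g(x)² ≤ g(y)² + ∫ |2 g g'|`, and `2 |g g'| ≤ g² + |g'|²`. Choosing `y` where `g²` is at most its
mean value turns this into the pointwise bound `g(x)² ≤ ((b - a)⁻¹ + 1) ∫ g² + ∫ |g'|²`, so
integrating over a subsegment of length `δ` gains the factor `δ`. Applying this on every line
parallel to a side of the rectangle and integrating in the transversal direction (Fubini) bounds
the `L²` norm of `u` on each of the four strips of width `δ` along the sides by `δ` times the `H¹`
norm, and these four strips cover the collar.
-/

open MeasureTheory Set Metric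
open scoped Interval

section Segment

variable {g M : ℝ → ℝ} {a b : ℝ}

theorem sq_le_sq_add_setIntegral (hg : Differentiable ℝ g) (hM : ∀ t, ‖deriv g t‖ ≤ M t)
    (hM2 : IntegrableOn (fun t => M t ^ 2) (Icc a b)) {x y : ℝ} (hx : x ∈ Icc a b)
    (hy : y ∈ Icc a b) :
    g x ^ 2 ≤ g y ^ 2 + ∫ t in Icc a b, (g t ^ 2 + M t ^ 2) := by
  have hdom : ∀ t, ‖2 * g t * deriv g t‖ ≤ g t ^ 2 + M t ^ 2 := fun t => by
    have hM' := hM t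
    rw [Real.norm_eq_abs] at hM' ⊢
    rw [abs_mul, abs_mul, abs_two]
    nlinarith [sq_nonneg (|g t| - |deriv g t|), sq_abs (g t), abs_nonneg (deriv g t)]
  have hint : IntegrableOn (fun t => g t ^ 2 + M t ^ 2) (Icc a b) :=
    (hg.continuous.pow 2).integrableOn_Icc.add hM2
  have hint' : IntegrableOn (fun t => 2 * g t * deriv g t) (Icc a b) :=
    hint.mono' (((continuous_const.mul hg.continuous).measurable.mul
      (measurable_deriv g)).aestronglyMeasurable) (ae_of_all _ hdom)
  have hsub : uIcc y x ⊆ Icc a b := uIcc_subset_Icc hy hx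
  have hftc : ∫ t in y..x, 2 * g t * deriv g t = g x ^ 2 - g y ^ 2 := by
    refine intervalIntegral.integral_eq_sub_of_hasDerivAt (f := fun t => g t ^ 2)
      (fun t _ => ?_) (hint'.mono_set hsub).intervalIntegrable
    simpa [mul_comm, mul_assoc, mul_left_comm] using (hg t).hasDerivAt.fun_pow 2
  have hIoc : Ι y x ⊆ Icc a b := uIoc_subset_uIcc.trans hsub
  have : g x ^ 2 - g y ^ 2 ≤ ∫ t in Icc a b, (g t ^ 2 + M t ^ 2) := calc
    g x ^ 2 - g y ^ 2 ≤ ‖∫ t in Ι y x, 2 * g t * deriv g t‖ := by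
      rw [← intervalIntegral.norm_intervalIntegral_eq, hftc]
      exact Real.le_norm_self _
    _ ≤ ∫ t in Ι y x, (g t ^ 2 + M t ^ 2) :=
      norm_integral_le_of_norm_le (hint.mono_set hIoc) (ae_of_all _ hdom)
    _ ≤ ∫ t in Icc a b, (g t ^ 2 + M t ^ 2) :=
      setIntegral_mono_set hint (ae_of_all _ fun t => by positivity) hIoc.eventuallyLE
  linarith

theorem sq_le_of_norm_deriv_le (hab : a < b) (hg : Differentiable ℝ g)
    (hM : ∀ t, ‖deriv g t‖ ≤ M t) (hM2 : IntegrableOn (fun t => M t ^ 2) (Icc a b)) {x : ℝ}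
    (hx : x ∈ Icc a b) :
    g x ^ 2 ≤ ((b - a)⁻¹ + 1) * (∫ t in Icc a b, g t ^ 2) + ∫ t in Icc a b, M t ^ 2 := by
  have hg2 : IntegrableOn (fun t => g t ^ 2) (Icc a b) := (hg.continuous.pow 2).integrableOn_Icc
  obtain ⟨y, hy, hy_le⟩ := exists_le_setAverage (by simp [hab]) (by simp) hg2
  rw [setAverage_eq, smul_eq_mul, Real.volume_real_Icc_of_le hab.le] at hy_le
  have := sq_le_sq_add_setIntegral hg hM hM2 hx hy
  rw [integral_add hg2 hM2] at this
  linarith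

theorem setIntegral_Icc_sq_le (hab : a < b) (hg : Differentiable ℝ g)
    (hM : ∀ t, ‖deriv g t‖ ≤ M t) (hM2 : IntegrableOn (fun t => M t ^ 2) (Icc a b)) {c d : ℝ}
    (hac : a ≤ c) (hcd : c ≤ d) (hdb : d ≤ b) :
    ∫ t in Icc c d, g t ^ 2 ≤
      (d - c) * (((b - a)⁻¹ + 1) * (∫ t in Icc a b, g t ^ 2) + ∫ t in Icc a b, M t ^ 2) := by
  have := norm_setIntegral_le_of_norm_le_const (f := fun t => g t ^ 2)
    (measure_Icc_lt_top (μ := volume)) fun t ht => (Real.norm_of_nonneg (sq_nonneg _)).trans_le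
      (sq_le_of_norm_deriv_le hab hg hM hM2 ⟨hac.trans ht.1, ht.2.trans hdb⟩)
  rw [Real.volume_real_Icc_of_le hcd, mul_comm] at this
  exact (Real.le_norm_self _).trans this

end Segment

theorem MeasureTheory.IntegrableOn.integral_prod_left {α β E : Type*} [MeasurableSpace α]
    [MeasurableSpace β] [NormedAddCommGroup E] [NormedSpace ℝ E] {μ : Measure α}
    {ν : Measure β} [SFinite μ] [SFinite ν] {f : α × β → E} {s : Set α} {t : Set β}
    (hf : IntegrableOn f (s ×ˢ t) (μ.prod ν)) :
    IntegrableOn (fun x => ∫ y in t, f (x, y) ∂ν) s μ := by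
  rw [IntegrableOn, ← Measure.prod_restrict] at hf
  exact hf.integral_prod_left

section Strip

variable {α : Type*} [MeasurableSpace α] {μ : Measure α} [SFinite μ] {s : Set α}
  {a b c d : ℝ}

theorem setIntegral_prod_Icc_sq_le {u G : α × ℝ → ℝ} (hab : a < b) (hac : a ≤ c) (hcd : c ≤ d)
    (hdb : d ≤ b) (hu : ∀ x, Differentiable ℝ fun t => u (x, t))
    (hG : ∀ x t, ‖deriv (fun t => u (x, t)) t‖ ≤ G (x, t))
    (hu2 : IntegrableOn (fun z => u z ^ 2) (s ×ˢ Icc a b) (μ.prod volume))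
    (hG2 : IntegrableOn (fun z => G z ^ 2) (s ×ˢ Icc a b) (μ.prod volume)) :
    ∫ z in s ×ˢ Icc c d, u z ^ 2 ∂μ.prod volume ≤
      (d - c) * (((b - a)⁻¹ + 1) * (∫ z in s ×ˢ Icc a b, u z ^ 2 ∂μ.prod volume) +
        ∫ z in s ×ˢ Icc a b, G z ^ 2 ∂μ.prod volume) := by
  have hu2' : IntegrableOn (fun z => u z ^ 2) (s ×ˢ Icc c d) (μ.prod volume) :=
    hu2.mono_set (prod_mono subset_rfl (Icc_subset_Icc hac hdb))
  have hslice : ∀ᵐ x ∂μ.restrict s, IntegrableOn (fun t => G (x, t) ^ 2) (Icc a b) := by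
    rw [IntegrableOn, ← Measure.prod_restrict] at hG2
    exact hG2.prod_right_ae
  calc ∫ z in s ×ˢ Icc c d, u z ^ 2 ∂μ.prod volume
      = ∫ x in s, (∫ t in Icc c d, u (x, t) ^ 2) ∂μ := setIntegral_prod _ hu2'
    _ ≤ ∫ x in s, (d - c) * (((b - a)⁻¹ + 1) * (∫ t in Icc a b, u (x, t) ^ 2) +
          ∫ t in Icc a b, G (x, t) ^ 2) ∂μ :=
      integral_mono_ae hu2'.integral_prod_left
        (((hu2.integral_prod_left.const_mul _).add hG2.integral_prod_left).const_mul _)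
        (by filter_upwards [hslice] with x hx using
          setIntegral_Icc_sq_le hab (hu x) (hG x) hx hac hcd hdb)
    _ = _ := by
      rw [integral_const_mul, integral_add (hu2.integral_prod_left.const_mul _)
        hG2.integral_prod_left, integral_const_mul, setIntegral_prod _ hu2,
        setIntegral_prod _ hG2]

theorem setIntegral_Icc_prod_sq_le {u G : ℝ × α → ℝ} (hab : a < b) (hac : a ≤ c) (hcd : c ≤ d)
    (hdb : d ≤ b) (hu : ∀ y, Differentiable ℝ fun t => u (t, y))
    (hG : ∀ t y, ‖deriv (fun t => u (t, y)) t‖ ≤ G (t, y))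
    (hu2 : IntegrableOn (fun z => u z ^ 2) (Icc a b ×ˢ s) (volume.prod μ))
    (hG2 : IntegrableOn (fun z => G z ^ 2) (Icc a b ×ˢ s) (volume.prod μ)) :
    ∫ z in Icc c d ×ˢ s, u z ^ 2 ∂volume.prod μ ≤
      (d - c) * (((b - a)⁻¹ + 1) * (∫ z in Icc a b ×ˢ s, u z ^ 2 ∂volume.prod μ) +
        ∫ z in Icc a b ×ˢ s, G z ^ 2 ∂volume.prod μ) := by
  have := setIntegral_prod_Icc_sq_le (u := fun z => u z.swap) (G := fun z => G z.swap)
    hab hac hcd hdb hu (fun x t => hG t x) hu2.swap hG2.swap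
  rwa [setIntegral_prod_swap (f := fun z => u z ^ 2),
    setIntegral_prod_swap (f := fun z => u z ^ 2),
    setIntegral_prod_swap (f := fun z => G z ^ 2)] at this

end Strip

section PartialDeriv

variable {E F : Type*} [NormedAddCommGroup E] [NormedSpace ℝ E] [NormedAddCommGroup F]
  [NormedSpace ℝ F]

theorem norm_deriv_comp_prodMk_left_le {u : ℝ × F → E} {x : ℝ} {y : F}
    (hu : DifferentiableAt ℝ u (x, y)) :
    ‖deriv (fun t => u (t, y)) x‖ ≤ ‖fderiv ℝ u (x, y)‖ := by
  have : HasDerivAt (fun t => u (t, y)) (fderiv ℝ u (x, y) (1, 0)) x :=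
    hu.hasFDerivAt.comp_hasDerivAt x ((hasDerivAt_id x).prodMk (hasDerivAt_const x y))
  rw [this.deriv]
  simpa using (fderiv ℝ u (x, y)).le_opNorm (1, 0)

theorem norm_deriv_comp_prodMk_right_le {u : F × ℝ → E} {x : F} {y : ℝ}
    (hu : DifferentiableAt ℝ u (x, y)) :
    ‖deriv (fun t => u (x, t)) y‖ ≤ ‖fderiv ℝ u (x, y)‖ := by
  have : HasDerivAt (fun t => u (x, t)) (fderiv ℝ u (x, y) (0, 1)) y :=
    hu.hasFDerivAt.comp_hasDerivAt y ((hasDerivAt_const y x).prodMk (hasDerivAt_id y))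
  rw [this.deriv]
  simpa using (fderiv ℝ u (x, y)).le_opNorm (0, 1)

end PartialDeriv

theorem setIntegral_union_le {X : Type*} [MeasurableSpace X] {μ : Measure X} {f : X → ℝ}
    {s t : Set X} (hf : 0 ≤ f) (hs : IntegrableOn f s μ) (ht : IntegrableOn f t μ) :
    ∫ x in s ∪ t, f x ∂μ ≤ (∫ x in s, f x ∂μ) + ∫ x in t, f x ∂μ := by
  rw [← integral_add_measure hs ht]
  exact integral_mono_measure (Measure.restrict_union_le s t) (ae_of_all _ hf)
    (Integrable.add_measure hs ht)

section Rectangle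

variable {a₁ b₁ a₂ b₂ : ℝ}

theorem frontier_Icc_prod_Icc (h1 : a₁ ≤ b₁) (h2 : a₂ ≤ b₂) :
    frontier (Icc a₁ b₁ ×ˢ Icc a₂ b₂) = Icc a₁ b₁ ×ˢ {a₂, b₂} ∪ {a₁, b₁} ×ˢ Icc a₂ b₂ := by
  rw [frontier_prod_eq, closure_Icc, closure_Icc, frontier_Icc h1, frontier_Icc h2]

theorem collar_subset_strips (h1 : a₁ ≤ b₁) (h2 : a₂ ≤ b₂) (δ : ℝ) :
    {x ∈ Icc a₁ b₁ ×ˢ Icc a₂ b₂ | infDist x (frontier (Icc a₁ b₁ ×ˢ Icc a₂ b₂)) ≤ δ} ⊆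
      (Icc a₁ (a₁ + δ) ×ˢ Icc a₂ b₂ ∪ Icc (b₁ - δ) b₁ ×ˢ Icc a₂ b₂) ∪
        (Icc a₁ b₁ ×ˢ Icc a₂ (a₂ + δ) ∪ Icc a₁ b₁ ×ˢ Icc (b₂ - δ) b₂) := by
  rintro x ⟨⟨⟨hx₁, hx₁'⟩, hx₂, hx₂'⟩, hxδ⟩
  have hne : (frontier (Icc a₁ b₁ ×ˢ Icc a₂ b₂)).Nonempty := by
    rw [frontier_Icc_prod_Icc h1 h2]
    exact ⟨(a₁, a₂), Or.inr ⟨Or.inl rfl, left_mem_Icc.2 h2⟩⟩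
  obtain ⟨p, hp, hpx⟩ := isClosed_frontier.exists_infDist_eq_dist hne x
  rw [hpx, Prod.dist_eq, max_le_iff, Real.dist_eq, Real.dist_eq, abs_le, abs_le] at hxδ
  rw [frontier_Icc_prod_Icc h1 h2] at hp
  simp only [mem_union, mem_prod, mem_insert_iff, mem_singleton_iff] at hp
  simp only [mem_union, mem_prod, mem_Icc]
  obtain ⟨-, hp₂ | hp₂⟩ | ⟨hp₁ | hp₁, -⟩ := hp
  · exact .inr (.inl ⟨⟨hx₁, hx₁'⟩, hx₂, by linarith⟩)
  · exact .inr (.inr ⟨⟨hx₁, hx₁'⟩, by linarith, hx₂'⟩)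
  · exact .inl (.inl ⟨⟨hx₁, by linarith⟩, hx₂, hx₂'⟩)
  · exact .inl (.inr ⟨⟨by linarith, hx₁'⟩, hx₂, hx₂'⟩)

theorem setIntegral_collar_le {f : ℝ × ℝ → ℝ} {δ : ℝ} (hf : 0 ≤ f) (h1 : a₁ ≤ b₁)
    (h2 : a₂ ≤ b₂) (hδ₁ : δ ≤ b₁ - a₁) (hδ₂ : δ ≤ b₂ - a₂)
    (hfΩ : IntegrableOn f (Icc a₁ b₁ ×ˢ Icc a₂ b₂)) :
    ∫ x in {x ∈ Icc a₁ b₁ ×ˢ Icc a₂ b₂ | infDist x (frontier (Icc a₁ b₁ ×ˢ Icc a₂ b₂)) ≤ δ},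
        f x ≤
      ((∫ x in Icc a₁ (a₁ + δ) ×ˢ Icc a₂ b₂, f x) + ∫ x in Icc (b₁ - δ) b₁ ×ˢ Icc a₂ b₂, f x) +
        ((∫ x in Icc a₁ b₁ ×ˢ Icc a₂ (a₂ + δ), f x) +
          ∫ x in Icc a₁ b₁ ×ˢ Icc (b₂ - δ) b₂, f x) := by
  have h₁ : IntegrableOn f (Icc a₁ (a₁ + δ) ×ˢ Icc a₂ b₂) :=
    hfΩ.mono_set (prod_mono (Icc_subset_Icc le_rfl (by linarith)) subset_rfl)
  have h₂ : IntegrableOn f (Icc (b₁ - δ) b₁ ×ˢ Icc a₂ b₂) :=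
    hfΩ.mono_set (prod_mono (Icc_subset_Icc (by linarith) le_rfl) subset_rfl)
  have h₃ : IntegrableOn f (Icc a₁ b₁ ×ˢ Icc a₂ (a₂ + δ)) :=
    hfΩ.mono_set (prod_mono subset_rfl (Icc_subset_Icc le_rfl (by linarith)))
  have h₄ : IntegrableOn f (Icc a₁ b₁ ×ˢ Icc (b₂ - δ) b₂) :=
    hfΩ.mono_set (prod_mono subset_rfl (Icc_subset_Icc (by linarith) le_rfl))
  calc _ ≤ ∫ x in (Icc a₁ (a₁ + δ) ×ˢ Icc a₂ b₂ ∪ Icc (b₁ - δ) b₁ ×ˢ Icc a₂ b₂) ∪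
        (Icc a₁ b₁ ×ˢ Icc a₂ (a₂ + δ) ∪ Icc a₁ b₁ ×ˢ Icc (b₂ - δ) b₂), f x :=
      setIntegral_mono_set ((h₁.union h₂).union (h₃.union h₄)) (ae_of_all _ fun x => hf x)
        (collar_subset_strips h1 h2 δ).eventuallyLE
    _ ≤ _ := (setIntegral_union_le hf (h₁.union h₂) (h₃.union h₄)).trans
      (add_le_add (setIntegral_union_le hf h₁ h₂) (setIntegral_union_le hf h₃ h₄))

end Rectangle

/-- Collar estimate on a rectangle: `‖u‖²_{L²(Ω_δ)} ≤ C δ ‖u‖²_{H¹(Ω)}`. -/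
theorem stmt9 (a₁ b₁ a₂ b₂ : ℝ) (h1 : a₁ < b₁) (h2 : a₂ < b₂) :
    ∃ C : ℝ, 0 < C ∧ ∀ δ : ℝ, 0 < δ → δ ≤ min (b₁ - a₁) (b₂ - a₂) / 2 →
      ∀ u : ℝ × ℝ → ℝ, Differentiable ℝ u →
        MemLp u 2 (volume.restrict (Icc a₁ b₁ ×ˢ Icc a₂ b₂)) →
        MemLp (fun x => ‖fderiv ℝ u x‖) 2
          (volume.restrict (Icc a₁ b₁ ×ˢ Icc a₂ b₂)) →
        (∫ x in {x ∈ Icc a₁ b₁ ×ˢ Icc a₂ b₂ |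
            Metric.infDist x (frontier (Icc a₁ b₁ ×ˢ Icc a₂ b₂)) ≤ δ}, (u x) ^ 2)
          ≤ C * δ *
            ((∫ x in Icc a₁ b₁ ×ˢ Icc a₂ b₂, (u x) ^ 2) +
              ∫ x in Icc a₁ b₁ ×ˢ Icc a₂ b₂, ‖fderiv ℝ u x‖ ^ 2) := by
  set m := min (b₁ - a₁) (b₂ - a₂)
  have hm : 0 < m := lt_min (sub_pos.2 h1) (sub_pos.2 h2)
  refine ⟨4 * (m⁻¹ + 1), by positivity, fun δ _ hδm u hu hu2 hdu2 => ?_⟩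
  have hδ₁ : δ ≤ (b₁ - a₁) / 2 := hδm.trans (by gcongr; exact min_le_left _ _)
  have hδ₂ : δ ≤ (b₂ - a₂) / 2 := hδm.trans (by gcongr; exact min_le_right _ _)
  set A := ∫ x in Icc a₁ b₁ ×ˢ Icc a₂ b₂, u x ^ 2
  set B := ∫ x in Icc a₁ b₁ ×ˢ Icc a₂ b₂, ‖fderiv ℝ u x‖ ^ 2
  have hweaken : ∀ ℓ, m ≤ ℓ → δ * ((ℓ⁻¹ + 1) * A + B) ≤ δ * ((m⁻¹ + 1) * (A + B)) := by
    intro ℓ hℓ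
    have hΩ : MeasurableSet (Icc a₁ b₁ ×ˢ Icc a₂ b₂) := measurableSet_Icc.prod measurableSet_Icc
    have hA : 0 ≤ A := setIntegral_nonneg hΩ fun _ _ => sq_nonneg _
    have hB : 0 ≤ B := setIntegral_nonneg hΩ fun _ _ => sq_nonneg _
    gcongr
    nlinarith [inv_anti₀ hm hℓ, inv_pos.2 hm]
  have hu₁ (y : ℝ) : Differentiable ℝ fun t => u (t, y) :=
    hu.comp (differentiable_id.prodMk (differentiable_const y))
  have hu₂ (x : ℝ) : Differentiable ℝ fun t => u (x, t) :=
    hu.comp ((differentiable_const x).prodMk differentiable_id)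
  have hS₁ := setIntegral_Icc_prod_sq_le (d := a₁ + δ) h1 le_rfl (by linarith) (by linarith) hu₁
    (fun _ _ => norm_deriv_comp_prodMk_left_le (hu _)) hu2.integrable_sq hdu2.integrable_sq
  have hS₂ := setIntegral_Icc_prod_sq_le (c := b₁ - δ) h1 (by linarith) (by linarith) le_rfl hu₁
    (fun _ _ => norm_deriv_comp_prodMk_left_le (hu _)) hu2.integrable_sq hdu2.integrable_sq
  have hS₃ := setIntegral_prod_Icc_sq_le (d := a₂ + δ) h2 le_rfl (by linarith) (by linarith) hu₂
    (fun _ _ => norm_deriv_comp_prodMk_right_le (hu _)) hu2.integrable_sq hdu2.integrable_sq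
  have hS₄ := setIntegral_prod_Icc_sq_le (c := b₂ - δ) h2 (by linarith) (by linarith) le_rfl hu₂
    (fun _ _ => norm_deriv_comp_prodMk_right_le (hu _)) hu2.integrable_sq hdu2.integrable_sq
  rw [add_sub_cancel_left] at hS₁ hS₃
  rw [sub_sub_cancel] at hS₂ hS₄
  rw [← Measure.volume_eq_prod] at hS₁ hS₂ hS₃ hS₄
  refine (setIntegral_collar_le (fun _ => sq_nonneg _) h1.le h2.le (by linarith) (by linarith)
    hu2.integrable_sq).trans ?_
  linarith [hweaken _ (min_le_left _ _), hweaken _ (min_le_right _ _)]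
end

section
/- For smooth u on Ω and x ∈ Ω, the gradient of the smoothing operator admits the identity ∇u(x) − ∇(S_δ u)(x) = (1/w_δ(x))∫_Ω R_δ(x,y)(∇u(x) − ∇u(y)) dy + (1/w_δ(x)²)∫_{∂Ω}∫_Ω R_δ(x,y)R_δ(x,z)(u(z) − u(y)) n(z) dy dS_z, where n(z) is the outward unit normal. -/
/-!
The kernel is `R_δ(x, y) = g (x - y)` for a compactly supported `C¹` profile `g`, so `w_δ` and
`∫_Ω R_δ(·, y) u(y) dy` are convolutions and can be differentiated under the integral sign; the
quotient rule then expresses `∇(S_δ u)(x)` through `∫_Ω ∇_x R_δ(x, y) dy` and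
`∫_Ω ∇_x R_δ(x, y) u(y) dy`. Because `∇_x R_δ = -∇_y R_δ`, the divergence theorem applied
to `φ(z) = R_δ(x, z) (w_δ(x) u(z) - ∫_Ω R_δ(x, y) u(y) dy)` trades these for
`∫_Ω R_δ(x, y) ∇u(y) dy` and a boundary integral whose density is
`∫_Ω R_δ(x, y) R_δ(x, z) (u(z) - u(y)) dy`.
-/

open MeasureTheory Set

open InnerProductSpace Convolution

section Gradient

variable {F : Type*} [NormedAddCommGroup F] [InnerProductSpace ℝ F] [CompleteSpace F]
  {f g : F → ℝ} {f' g' x : F}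

theorem HasGradientAt.mul (hf : HasGradientAt f f' x) (hg : HasGradientAt g g' x) :
    HasGradientAt (fun y => f y * g y) (f x • g' + g x • f') x := by
  rw [hasGradientAt_iff_hasFDerivAt] at *
  refine (hf.mul hg).congr_fderiv ?_
  rw [map_add, map_smul, map_smul]

theorem HasGradientAt.inv (hf : HasGradientAt f f' x) (hx : f x ≠ 0) :
    HasGradientAt (fun y => (f y)⁻¹) (-(f x ^ 2)⁻¹ • f') x := by
  rw [hasGradientAt_iff_hasFDerivAt] at *
  refine ((hasFDerivAt_inv hx).comp x hf).congr_fderiv ?_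
  ext v
  simp [mul_comm]

theorem HasGradientAt.const_mul (hf : HasGradientAt f f' x) (c : ℝ) :
    HasGradientAt (fun y => c * f y) (c • f') x := by
  rw [hasGradientAt_iff_hasFDerivAt] at *
  refine (hf.const_mul c).congr_fderiv ?_
  rw [map_smul]

theorem HasGradientAt.sub_const (hf : HasGradientAt f f' x) (c : ℝ) :
    HasGradientAt (fun y => f y - c) f' x :=
  hf.hasFDerivAt.sub_const c

theorem HasGradientAt.comp_const_sub {a : F} (hf : HasGradientAt f f' (a - x)) :
    HasGradientAt (fun y => f (a - y)) (-f') x := by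
  rw [hasGradientAt_iff_hasFDerivAt] at *
  refine (hf.comp x ((hasFDerivAt_id x).const_sub a)).congr_fderiv ?_
  ext v
  simp

theorem ContDiff.continuous_gradient (hf : ContDiff ℝ 1 f) : Continuous (gradient f) :=
  (toDual ℝ F).symm.continuous.comp (hf.continuous_fderiv one_ne_zero)

theorem HasCompactSupport.gradient (hf : HasCompactSupport f) : HasCompactSupport (gradient f) :=
  hf.fderiv ℝ |>.comp_left (map_zero (toDual ℝ F).symm)

theorem gradient_comp_const_sub_mul {u : F → ℝ} (hg : ContDiff ℝ 1 g) (hu : ContDiff ℝ 1 u)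
    (x y : F) (a b : ℝ) :
    gradient (fun z => g (x - z) * (a * u z - b)) y =
      a • (g (x - y) • gradient u y) - a • (u y • gradient g (x - y)) +
        b • gradient g (x - y) := by
  have hgx : HasGradientAt (fun z => g (x - z)) (-gradient g (x - y)) y :=
    ((hg.differentiable one_ne_zero) (x - y)).hasGradientAt.comp_const_sub
  have hux : HasGradientAt (fun z => a * u z - b) (a • gradient u y) y :=
    (((hu.differentiable one_ne_zero) y).hasGradientAt.const_mul a).sub_const b
  rw [(hgx.mul hux).gradient]
  module

end Gradient

theorem HasCompactSupport.comp_const_sub {G V : Type*} [NormedAddCommGroup G] [Zero V]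
    [TopologicalSpace V] {f : G → V} (hf : HasCompactSupport f) (a : G) :
    HasCompactSupport fun y => f (a - y) :=
  hf.comp_homeomorph (Homeomorph.subLeft a)

theorem integrable_comp_const_sub {G V : Type*} [NormedAddCommGroup G] [MeasurableSpace G]
    [BorelSpace G] [NormedAddCommGroup V] {μ : Measure G} [IsFiniteMeasureOnCompacts μ]
    {k : G → V} (hk : Continuous k) (hkc : HasCompactSupport k) (x : G) :
    Integrable (fun y => k (x - y)) μ :=
  (hk.comp (continuous_sub_left x)).integrable_of_hasCompactSupport (hkc.comp_const_sub x)

section Smoothing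

variable {E : Type*} [NormedAddCommGroup E] [InnerProductSpace ℝ E] [FiniteDimensional ℝ E]
  [MeasurableSpace E] [BorelSpace E] (μ : Measure E) (Ω : Set E) (g : E → ℝ)

-- `w_δ` and `S_δ` for the translation-invariant kernel `(x, y) ↦ g (x - y)`
noncomputable def smoothingWeight (x : E) : ℝ := ∫ y in Ω, g (x - y) ∂μ

noncomputable def smoothing (u : E → ℝ) (x : E) : ℝ :=
  (smoothingWeight μ Ω g x)⁻¹ * ∫ y in Ω, g (x - y) * u y ∂μ

variable {μ Ω g} [μ.IsAddHaarMeasure] {u : E → ℝ}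

theorem integrable_comp_const_sub_smul {V : Type*} [NormedAddCommGroup V] [NormedSpace ℝ V]
    (hg : Continuous g) (hgc : HasCompactSupport g) {v : E → V} (hv : Continuous v) (x : E) :
    Integrable (fun y => g (x - y) • v y) μ :=
  hv.locallyIntegrable.integrable_smul_left_of_hasCompactSupport
    (hg.comp (continuous_sub_left x)) (hgc.comp_const_sub x)

theorem setIntegral_comp_const_sub_smul_sub {V : Type*} [NormedAddCommGroup V]
    [NormedSpace ℝ V] [CompleteSpace V] (hg : Continuous g) (hgc : HasCompactSupport g) {v : E → V}
    (hv : Continuous v) (x : E) :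
    ∫ y in Ω, g (x - y) • (v x - v y) ∂μ =
      smoothingWeight μ Ω g x • v x - ∫ y in Ω, g (x - y) • v y ∂μ := by
  simp_rw [smul_sub]
  rw [integral_sub _ (integrable_comp_const_sub_smul hg hgc hv x).restrict, integral_smul_const]
  · rfl
  · exact (integrable_comp_const_sub hg hgc x).restrict.smul_const _

theorem setIntegral_comp_const_sub_mul_mul_sub (hg : Continuous g) (hgc : HasCompactSupport g)
    (hu : Continuous u) (x z : E) :
    ∫ y in Ω, g (x - y) * g (x - z) * (u z - u y) ∂μ =
      g (x - z) * (smoothingWeight μ Ω g x * u z - ∫ y in Ω, g (x - y) * u y ∂μ) := by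
  have hgx : Integrable (fun y => g (x - y)) (μ.restrict Ω) :=
    (integrable_comp_const_sub hg hgc x).restrict
  have hgux : Integrable (fun y => g (x - y) * u y) (μ.restrict Ω) :=
    (integrable_comp_const_sub_smul hg hgc hu x).restrict
  calc ∫ y in Ω, g (x - y) * g (x - z) * (u z - u y) ∂μ
      = ∫ y in Ω, g (x - z) * u z * g (x - y) - g (x - z) * (g (x - y) * u y) ∂μ := by
        congr 1 with y; ring
    _ = g (x - z) * (smoothingWeight μ Ω g x * u z - ∫ y in Ω, g (x - y) * u y ∂μ) := by
        rw [integral_sub (hgx.const_mul _) (hgux.const_mul _), integral_const_mul,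
          integral_const_mul, smoothingWeight]
        ring

theorem hasGradientAt_setIntegral_comp_sub_mul (hΩ : MeasurableSet Ω) (hg : ContDiff ℝ 1 g)
    (hgc : HasCompactSupport g) {c : E → ℝ} (hc : LocallyIntegrable c μ) (x : E) :
    HasGradientAt (fun x' => ∫ y in Ω, g (x' - y) * c y ∂μ)
      (∫ y in Ω, c y • gradient g (x - y) ∂μ) x := by
  set L := ContinuousLinearMap.mul ℝ ℝ
  have hcΩ : LocallyIntegrable (Ω.indicator c) μ := hc.indicator hΩ
  have hconv : (Ω.indicator c ⋆[L, μ] g) = fun x' => ∫ y in Ω, g (x' - y) * c y ∂μ := by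
    ext x'
    rw [convolution_def, ← integral_indicator hΩ]
    congr 1 with y
    by_cases hy : y ∈ Ω <;> simp [hy, L, mul_comm]
  have hint : Integrable (fun y => c y • gradient g (x - y)) (μ.restrict Ω) :=
    (hc.integrable_smul_right_of_hasCompactSupport
      (hg.continuous_gradient.comp (continuous_sub_left x))
      (hgc.gradient.comp_const_sub x)).restrict
  rw [hasGradientAt_iff_hasFDerivAt, ← hconv]
  refine (hgc.hasFDerivAt_convolution_right L hcΩ hg x).congr_fderiv ?_
  ext v
  rw [toDual_apply_apply, real_inner_comm, ← integral_inner hint v,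
    convolution_precompR_apply L hcΩ (hgc.fderiv ℝ) (hg.continuous_fderiv one_ne_zero),
    convolution_def, ← integral_indicator hΩ]
  congr 1 with y
  by_cases hy : y ∈ Ω
  · simp [hy, L, real_inner_smul_right]
  · simp [hy]

theorem hasGradientAt_smoothingWeight (hΩ : MeasurableSet Ω) (hg : ContDiff ℝ 1 g)
    (hgc : HasCompactSupport g) (x : E) :
    HasGradientAt (smoothingWeight μ Ω g) (∫ y in Ω, gradient g (x - y) ∂μ) x := by
  unfold smoothingWeight
  simpa only [mul_one, one_smul] using
    hasGradientAt_setIntegral_comp_sub_mul hΩ hg hgc (locallyIntegrable_const (μ := μ) 1) x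

theorem setIntegral_gradient_comp_const_sub_mul (hg : ContDiff ℝ 1 g) (hgc : HasCompactSupport g)
    (hu : ContDiff ℝ 1 u) (x : E) (a b : ℝ) :
    ∫ y in Ω, gradient (fun z => g (x - z) * (a * u z - b)) y ∂μ =
      a • ∫ y in Ω, g (x - y) • gradient u y ∂μ - a • ∫ y in Ω, u y • gradient g (x - y) ∂μ +
        b • ∫ y in Ω, gradient g (x - y) ∂μ := by
  have h₁ : Integrable (fun y => g (x - y) • gradient u y) (μ.restrict Ω) :=
    (integrable_comp_const_sub_smul hg.continuous hgc hu.continuous_gradient x).restrict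
  have h₂ : Integrable (fun y => u y • gradient g (x - y)) (μ.restrict Ω) :=
    (hu.continuous.locallyIntegrable.integrable_smul_right_of_hasCompactSupport
      (hg.continuous_gradient.comp (continuous_sub_left x))
      (hgc.gradient.comp_const_sub x)).restrict
  have h₃ : Integrable (fun y => gradient g (x - y)) (μ.restrict Ω) :=
    (integrable_comp_const_sub hg.continuous_gradient hgc.gradient x).restrict
  simp only [gradient_comp_const_sub_mul hg hu]
  rw [integral_add, integral_sub, integral_smul, integral_smul, integral_smul]
  exacts [h₁.smul a, h₂.smul a, (h₁.smul a).sub (h₂.smul a), h₃.smul b]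

theorem gradient_sub_gradient_smoothing (hΩ : MeasurableSet Ω) {σ : Measure E} {ν : E → E}
    (hdiv : ∀ φ : E → ℝ, ContDiff ℝ 1 φ →
      ∫ x in Ω, gradient φ x ∂μ = ∫ z, φ z • ν z ∂σ)
    (hg : ContDiff ℝ 1 g) (hgc : HasCompactSupport g) (hu : ContDiff ℝ 1 u) {x : E}
    (hw : smoothingWeight μ Ω g x ≠ 0) :
    gradient u x - gradient (smoothing μ Ω g u) x =
      (smoothingWeight μ Ω g x)⁻¹ •
          ∫ y in Ω, g (x - y) • (gradient u x - gradient u y) ∂μ +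
        (smoothingWeight μ Ω g x ^ 2)⁻¹ •
          ∫ z, (∫ y in Ω, g (x - y) * g (x - z) * (u z - u y) ∂μ) • ν z ∂σ := by
  have hS : HasGradientAt (smoothing μ Ω g u) _ x :=
    ((hasGradientAt_smoothingWeight hΩ hg hgc x).inv hw).mul
      (hasGradientAt_setIntegral_comp_sub_mul hΩ hg hgc hu.continuous.locallyIntegrable x)
  have hφ : ContDiff ℝ 1 fun z =>
      g (x - z) * (smoothingWeight μ Ω g x * u z - ∫ y in Ω, g (x - y) * u y ∂μ) :=
    (hg.comp (contDiff_const.sub contDiff_id)).mul ((contDiff_const.mul hu).sub contDiff_const)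
  simp_rw [hS.gradient,
    setIntegral_comp_const_sub_smul_sub hg.continuous hgc hu.continuous_gradient,
    setIntegral_comp_const_sub_mul_mul_sub hg.continuous hgc hu.continuous]
  rw [← hdiv _ hφ, setIntegral_gradient_comp_const_sub_mul hg hgc hu]
  match_scalars <;> field_simp
  ring

end Smoothing

noncomputable def scaledKernelProfile (n : ℕ) (α δ : ℝ) (R : ℝ → ℝ)
    (v : EuclideanSpace ℝ (Fin n)) : ℝ :=
  α / δ ^ n * R (‖v‖ ^ 2 / (4 * δ ^ 2))

section ScaledKernel

variable {n : ℕ} {α δ : ℝ} {R : ℝ → ℝ}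

theorem contDiff_scaledKernelProfile {k : WithTop ℕ∞} (hR : ContDiff ℝ k R) :
    ContDiff ℝ k (scaledKernelProfile n α δ R) :=
  contDiff_const.mul (hR.comp ((contDiff_norm_sq ℝ).div_const _))

theorem hasCompactSupport_scaledKernelProfile (hδ : δ ≠ 0) (hR : ∀ r, 1 < r → R r = 0) :
    HasCompactSupport (scaledKernelProfile n α δ R) := by
  refine HasCompactSupport.intro (isCompact_closedBall 0 (2 * |δ|)) fun v hv => ?_
  rw [Metric.mem_closedBall, dist_zero_right, not_le] at hv
  have hδ2 : 0 < 4 * δ ^ 2 := by positivity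
  have h1 : 1 < ‖v‖ ^ 2 / (4 * δ ^ 2) := by
    rw [one_lt_div hδ2]
    nlinarith [abs_nonneg δ, sq_abs δ]
  rw [scaledKernelProfile, hR _ h1, mul_zero]

end ScaledKernel

theorem stmt13_general (n : ℕ) (Ω : Set (EuclideanSpace ℝ (Fin n)))
    (hΩm : MeasurableSet Ω)
    (R : ℝ → ℝ) (α δ : ℝ) (hδ : 0 < δ)
    (hRC1 : ContDiff ℝ 1 R) (hsupp : ∀ r, 1 < r → R r = 0)
    (σ : Measure (EuclideanSpace ℝ (Fin n)))
    (nvec : EuclideanSpace ℝ (Fin n) → EuclideanSpace ℝ (Fin n))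
    -- the divergence theorem for `Ω` with outward normal `nvec` and surface measure `σ`
    (hdiv : ∀ φ : EuclideanSpace ℝ (Fin n) → ℝ, ContDiff ℝ 1 φ →
      (∫ x in Ω, gradient φ x) = ∫ z, φ z • nvec z ∂σ)
    (u : EuclideanSpace ℝ (Fin n) → ℝ) (hu : ContDiff ℝ 1 u)
    -- positivity of the weight `w_δ` on `Ω`
    (hw : ∀ x ∈ Ω, 0 < ∫ y in Ω, scaledKernel n α δ R x y) :
    ∀ x ∈ Ω,
      gradient u x -
        gradient (fun x' => (∫ y in Ω, scaledKernel n α δ R x' y)⁻¹ *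
          ∫ y in Ω, scaledKernel n α δ R x' y * u y) x =
      (∫ y in Ω, scaledKernel n α δ R x y)⁻¹ •
          (∫ y in Ω, scaledKernel n α δ R x y • (gradient u x - gradient u y)) +
        ((∫ y in Ω, scaledKernel n α δ R x y) ^ 2)⁻¹ •
          ∫ z, (∫ y in Ω,
              scaledKernel n α δ R x y * scaledKernel n α δ R x z * (u z - u y)) •
            nvec z ∂σ :=
  fun x hx => gradient_sub_gradient_smoothing (g := scaledKernelProfile n α δ R) hΩm hdiv
    (contDiff_scaledKernelProfile hRC1) (hasCompactSupport_scaledKernelProfile hδ.ne' hsupp) hu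
    (hw x hx).ne'

/-- Identity for the gradient of the smoothing operator `S_δ` with boundary term. -/
theorem stmt13 (n : ℕ) (Ω : Set (EuclideanSpace ℝ (Fin n)))
    (hΩm : MeasurableSet Ω) (hΩb : Bornology.IsBounded Ω)
    (R : ℝ → ℝ) (α δ : ℝ) (hα : 0 < α) (hδ : 0 < δ)
    (hRC1 : ContDiff ℝ 1 R) (hR : ∀ r, 0 ≤ R r) (hsupp : ∀ r, 1 < r → R r = 0)
    (σ : Measure (EuclideanSpace ℝ (Fin n))) [IsFiniteMeasure σ]
    (hσsupp : σ (frontier Ω)ᶜ = 0)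
    (nvec : EuclideanSpace ℝ (Fin n) → EuclideanSpace ℝ (Fin n))
    (hnvec : ∀ z ∈ frontier Ω, ‖nvec z‖ = 1)
    -- the divergence theorem for `Ω` with outward normal `nvec` and surface measure `σ`
    (hdiv : ∀ φ : EuclideanSpace ℝ (Fin n) → ℝ, ContDiff ℝ 1 φ →
      (∫ x in Ω, gradient φ x) = ∫ z, φ z • nvec z ∂σ)
    (u : EuclideanSpace ℝ (Fin n) → ℝ) (hu : ContDiff ℝ 1 u)
    -- positivity of the weight `w_δ` on `Ω`
    (hw : ∀ x ∈ Ω, 0 < ∫ y in Ω, scaledKernel n α δ R x y) :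
    ∀ x ∈ Ω,
      gradient u x -
        gradient (fun x' => (∫ y in Ω, scaledKernel n α δ R x' y)⁻¹ *
          ∫ y in Ω, scaledKernel n α δ R x' y * u y) x =
      (∫ y in Ω, scaledKernel n α δ R x y)⁻¹ •
          (∫ y in Ω, scaledKernel n α δ R x y • (gradient u x - gradient u y)) +
        ((∫ y in Ω, scaledKernel n α δ R x y) ^ 2)⁻¹ •
          ∫ z, (∫ y in Ω,
              scaledKernel n α δ R x y * scaledKernel n α δ R x z * (u z - u y)) •
            nvec z ∂σ :=
  stmt13_general n Ω hΩm R α δ hδ hRC1 hsupp σ nvec hdiv u hu hw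
end

section
/- Let p, q be polynomials, P an antiderivative of p, q' the derivative of q, and λ > 0. Then the double Gaussian integral Ī(p,q) = ∫_a^b p(x) ∫_{a'}^{b'} e^{−λ²(x−y)²} q(y) dy dx satisfies the reduction formula Ī(p,q) = P(b)I(q,a',b',b) − P(a)I(q,a',b',a) + q(b')I(P,a,b,b') − q(a')I(P,a,b,a') − Ī(P,q'), where I(r,c,d,l) = ∫_c^d r(x) e^{−λ²(x−l)²} dx. -/
open intervalIntegral Polynomial

/-!
Let `G(x, y) = P(x) k(x - y) q(y)` with `k(t) = e^{-λ²t²}`. Since `∂ₓ k(x - y) = -∂ᵧ k(x - y)`,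
the divergence `∂ₓG + ∂ᵧG` is `p(x) k(x - y) q(y) + P(x) k(x - y) q'(y)`, and the divergence
theorem on the rectangle `[a, b] × [a', b']` turns its double integral into the four boundary
terms. Only the translation invariance of the kernel matters, not its shape.
-/

lemma intervalIntegral_integral_add {f g : ℝ → ℝ → ℝ} (hf : Continuous (Function.uncurry f))
    (hg : Continuous (Function.uncurry g)) (a b c d : ℝ) :
    ∫ x in a..b, ∫ y in c..d, (f x y + g x y)
      = (∫ x in a..b, ∫ y in c..d, f x y) + ∫ x in a..b, ∫ y in c..d, g x y := by
  have hf' :=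
    continuous_parametric_intervalIntegral_of_continuous' (μ := MeasureTheory.volume) hf c d
  have hg' :=
    continuous_parametric_intervalIntegral_of_continuous' (μ := MeasureTheory.volume) hg c d
  rw [← integral_add (hf'.intervalIntegrable a b) (hg'.intervalIntegrable a b)]
  refine integral_congr fun x _ => integral_add ?_ ?_
  · exact (hf.comp (Continuous.prodMk_right x)).intervalIntegrable c d
  · exact (hg.comp (Continuous.prodMk_right x)).intervalIntegrable c d

section KernelSub

variable {P p q q' k k' : ℝ → ℝ}

lemma hasFDerivAt_mul_kernel_sub_mul {x y : ℝ} (hP : HasDerivAt P (p x) x)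
    (hk : HasDerivAt k (k' (x - y)) (x - y)) (hq : HasDerivAt q (q' y) y) :
    HasFDerivAt (fun z : ℝ × ℝ => P z.1 * k (z.1 - z.2) * q z.2)
      ((p x * k (x - y) * q y + P x * k' (x - y) * q y) • ContinuousLinearMap.fst ℝ ℝ ℝ
        + (P x * k (x - y) * q' y - P x * k' (x - y) * q y) • ContinuousLinearMap.snd ℝ ℝ ℝ)
      (x, y) := by
  have hfst : HasFDerivAt (fun z : ℝ × ℝ => z.1) (ContinuousLinearMap.fst ℝ ℝ ℝ) (x, y) :=
    hasFDerivAt_fst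
  have hsnd : HasFDerivAt (fun z : ℝ × ℝ => z.2) (ContinuousLinearMap.snd ℝ ℝ ℝ) (x, y) :=
    hasFDerivAt_snd
  have h := ((hP.comp_hasFDerivAt (x, y) hfst).mul
    (hk.comp_hasFDerivAt (x, y) (hfst.sub hsnd))).mul (hq.comp_hasFDerivAt (x, y) hsnd)
  refine h.congr_fderiv ?_
  ext <;> simp <;> ring

theorem intervalIntegral_mul_integral_kernel_sub (hP : ∀ x, HasDerivAt P (p x) x)
    (hk : ∀ t, HasDerivAt k (k' t) t) (hq : ∀ y, HasDerivAt q (q' y) y) (hp : Continuous p)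
    (hq' : Continuous q') (a b a' b' : ℝ) :
    ∫ x in a..b, p x * ∫ y in a'..b', k (x - y) * q y
      = P b * (∫ y in a'..b', k (b - y) * q y) - P a * (∫ y in a'..b', k (a - y) * q y)
        + q b' * (∫ x in a..b, P x * k (x - b')) - q a' * (∫ x in a..b, P x * k (x - a'))
        - ∫ x in a..b, P x * ∫ y in a'..b', k (x - y) * q' y := by
  have hPc : Continuous P := continuous_iff_continuousAt.2 fun x => (hP x).continuousAt
  have hkc : Continuous k := continuous_iff_continuousAt.2 fun t => (hk t).continuousAt
  have hqc : Continuous q := continuous_iff_continuousAt.2 fun y => (hq y).continuousAt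
  set G : ℝ × ℝ → ℝ := fun z => P z.1 * k (z.1 - z.2) * q z.2
  set G' : ℝ × ℝ → ℝ × ℝ →L[ℝ] ℝ := fun z =>
    (p z.1 * k (z.1 - z.2) * q z.2 + P z.1 * k' (z.1 - z.2) * q z.2) • .fst ℝ ℝ ℝ
      + (P z.1 * k (z.1 - z.2) * q' z.2 - P z.1 * k' (z.1 - z.2) * q z.2) • .snd ℝ ℝ ℝ
  have hG : ∀ z, HasFDerivAt G (G' z) z := fun z =>
    hasFDerivAt_mul_kernel_sub_mul (hP z.1) (hk _) (hq z.2)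
  have hdiv : ∀ z, G' z (1, 0) + G' z (0, 1)
      = p z.1 * (k (z.1 - z.2) * q z.2) + P z.1 * (k (z.1 - z.2) * q' z.2) := by
    intro z
    simp only [G', add_apply, smul_apply,
      ContinuousLinearMap.coe_fst', ContinuousLinearMap.coe_snd', smul_eq_mul]
    ring
  have hGc : Continuous G := by fun_prop
  have h := MeasureTheory.integral2_divergence_prod_of_hasFDerivAt G G G' G' a a' b b'
    hGc.continuousOn hGc.continuousOn (fun z _ => hG z) (fun z _ => hG z)
    (by
      simp_rw [hdiv]
      refine ContinuousOn.integrableOn_compact (isCompact_uIcc.prod isCompact_uIcc) ?_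
      exact Continuous.continuousOn (by fun_prop))
  simp only [hdiv] at h
  rw [intervalIntegral_integral_add (f := fun x y => p x * (k (x - y) * q y))
    (g := fun x y => P x * (k (x - y) * q' y)) (by fun_prop) (by fun_prop)] at h
  simp only [G, integral_mul_const] at h
  simp only [mul_assoc, integral_const_mul] at h
  linear_combination h

end KernelSub

lemma hasDerivAt_exp_neg_mul_sq (c t : ℝ) :
    HasDerivAt (fun t => Real.exp (-(c * t ^ 2)))
      (Real.exp (-(c * t ^ 2)) * -(c * (2 * t))) t := by
  simpa using (((hasDerivAt_id t).pow 2).const_mul c).neg.exp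

theorem stmt17_general (lam a b a' b' : ℝ)
    (p q P : Polynomial ℝ) (hP : P.derivative = p) :
    (∫ x in a..b, p.eval x *
        ∫ y in a'..b', Real.exp (-(lam ^ 2 * (x - y) ^ 2)) * q.eval y)
      = P.eval b * (∫ x in a'..b', q.eval x * Real.exp (-(lam ^ 2 * (x - b) ^ 2)))
        - P.eval a * (∫ x in a'..b', q.eval x * Real.exp (-(lam ^ 2 * (x - a) ^ 2)))
        + q.eval b' * (∫ x in a..b, P.eval x * Real.exp (-(lam ^ 2 * (x - b') ^ 2)))
        - q.eval a' * (∫ x in a..b, P.eval x * Real.exp (-(lam ^ 2 * (x - a') ^ 2)))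
        - ∫ x in a..b, P.eval x *
            ∫ y in a'..b', Real.exp (-(lam ^ 2 * (x - y) ^ 2)) * q.derivative.eval y := by
  have hsymm : ∀ c, ∫ y in a'..b', Real.exp (-(lam ^ 2 * (c - y) ^ 2)) * q.eval y
      = ∫ x in a'..b', q.eval x * Real.exp (-(lam ^ 2 * (x - c) ^ 2)) :=
    fun c => integral_congr fun y _ => by ring_nf
  rw [← hsymm, ← hsymm, ← hP]
  exact intervalIntegral_mul_integral_kernel_sub P.hasDerivAt (hasDerivAt_exp_neg_mul_sq _)
    q.hasDerivAt (by fun_prop) (by fun_prop) a b a' b'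

/-- Reduction formula for the double Gaussian integral
`Ī(p,q) = ∫_a^b p(x) ∫_{a'}^{b'} e^{-λ²(x-y)²} q(y) dy dx`. -/
theorem stmt17 (lam a b a' b' : ℝ) (hlam : 0 < lam) (hab : a ≤ b) (hab' : a' ≤ b')
    (p q P : Polynomial ℝ) (hP : P.derivative = p) :
    (∫ x in a..b, p.eval x *
        ∫ y in a'..b', Real.exp (-(lam ^ 2 * (x - y) ^ 2)) * q.eval y)
      = P.eval b * (∫ x in a'..b', q.eval x * Real.exp (-(lam ^ 2 * (x - b) ^ 2)))
        - P.eval a * (∫ x in a'..b', q.eval x * Real.exp (-(lam ^ 2 * (x - a) ^ 2)))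
        + q.eval b' * (∫ x in a..b, P.eval x * Real.exp (-(lam ^ 2 * (x - b') ^ 2)))
        - q.eval a' * (∫ x in a..b, P.eval x * Real.exp (-(lam ^ 2 * (x - a') ^ 2)))
        - ∫ x in a..b, P.eval x *
            ∫ y in a'..b', Real.exp (-(lam ^ 2 * (x - y) ^ 2)) * q.derivative.eval y :=
  stmt17_general lam a b a' b' p q P hP
end

section
/- Suppose ‖v‖_{L²(Ω)} ≤ C₁E_δ(v), (1/(2δ²))∬R_δ(v(x)−v(y))² ≤ C₁(E_δ(v))², E_δ(v+w) ≤ C₁(E_δ(v)+E_δ(w)), and the truncation decomposition ⟨L_δ e, v⟩ = ⟨r_in + r_bd, v⟩ for all v in the finite element space S_h, with ‖r_in‖_{L²} ≤ C₁δM, |⟨r_bd, v⟩| ≤ C₁δM·E_δ(v), the interpolation bounds ‖u − I_h u‖_{H¹} ≤ C₁(h^{k+1}/ρ)M, E_δ(u − I_h u) ≤ C₁‖u−I_hu‖_{H¹}, and the duality bound ⟨L_δ e, w⟩ ≤ C₁E_δ(e)‖w‖_{H¹}, where e = u − u_h, M = ‖u‖_{H^{max{k+1,3}}}. Then E_δ(e)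 ≤ C(h^{k+1}/ρ + δ)M and hence ‖u − u_h‖_{L²(Ω)} ≤ C(h^{k+1}/ρ + δ)M, with C depending only on C₁. -/
set_option maxHeartbeats 1000000


open scoped RealInnerProductSpace

/-- Abstract asymptotically compatible error bound for the nonlocal Galerkin
scheme: `E_δ(u - u_h) ≤ C (h^{k+1}/ρ + δ) M` and
`‖u - u_h‖_{L²} ≤ C (h^{k+1}/ρ + δ) M`, with `C` depending only on `C₁`. -/
theorem stmt19 (C₁ : ℝ) (hC₁ : 0 < C₁) :
    ∃ C : ℝ, 0 < C ∧
      ∀ (H : Type) (_ : NormedAddCommGroup H) (_ : InnerProductSpace ℝ H)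
        (Sh : Submodule ℝ H) (Lδ : H →ₗ[ℝ] H) (Ed normH1 : H → ℝ)
        (u uh Ihu rin rbd : H) (δ h ρ M : ℝ) (k : ℕ),
        0 < δ → 0 < h → 0 < ρ → 0 ≤ M →
        -- E_δ is a nonnegative functional with (E_δ v)² = ⟨L_δ v, v⟩
        (∀ v, 0 ≤ Ed v) →
        (∀ v, (Ed v) ^ 2 = ⟪Lδ v, v⟫) →
        uh ∈ Sh → Ihu ∈ Sh →
        -- L² coercivity
        (∀ v, ‖v‖ ≤ C₁ * Ed v) →
        -- weak subadditivity
        (∀ v w, Ed (v + w) ≤ C₁ * (Ed v + Ed w)) →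
        -- Galerkin orthogonality with truncation decomposition
        (∀ v ∈ Sh, ⟪Lδ (u - uh), v⟫ = ⟪rin + rbd, v⟫) →
        -- interior and boundary truncation bounds
        ‖rin‖ ≤ C₁ * δ * M →
        (∀ v ∈ Sh, |⟪rbd, v⟫| ≤ C₁ * δ * M * Ed v) →
        -- interpolation bounds
        normH1 (u - Ihu) ≤ C₁ * (h ^ (k + 1) / ρ) * M →
        Ed (u - Ihu) ≤ C₁ * normH1 (u - Ihu) →
        -- duality bound
        (∀ w, ⟪Lδ (u - uh), w⟫ ≤ C₁ * Ed (u - uh) * normH1 w) →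
        Ed (u - uh) ≤ C * (h ^ (k + 1) / ρ + δ) * M ∧
          ‖u - uh‖ ≤ C * (h ^ (k + 1) / ρ + δ) * M := by
  refine ⟨(C₁ + 1) * (C₁ ^ 3 + 2 * C₁ ^ 2 + (C₁ ^ 5 + C₁ ^ 4) / 4 + 1), by positivity, ?_⟩
  intro H _ _ Sh Lδ Ed normH1 u uh Ihu rin rbd δ h ρ M k hδ hh hρ hM hEd0 hEdsq huh hIhu
    hL2 hsub hGal hrin hrbd hinterp hEdinterp hdual
  set A : ℝ := h ^ (k + 1) / ρ with hA
  clear_value A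
  have hA0 : 0 ≤ A := by rw [hA]; positivity
  have hδ0 : (0:ℝ) ≤ δ := hδ.le
  set e : H := u - uh with he
  set η : H := u - Ihu with hη
  set v : H := Ihu - uh with hv
  clear_value e η v
  have hvS : v ∈ Sh := by rw [hv]; exact Sh.sub_mem hIhu huh
  have hev : e = η + v := by rw [he, hη, hv, sub_add_sub_cancel]
  set E : ℝ := Ed e with hE
  clear_value E
  have hE0 : 0 ≤ E := hE ▸ hEd0 e
  set N : ℝ := normH1 η with hN
  clear_value N
  have hN0 : 0 ≤ N := by nlinarith [hEd0 η, hEdinterp]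
  have hNle : N ≤ C₁ * A * M := hinterp
  -- Ed (-η) ≤ C₁ * N
  have hEdneg : Ed (-η) ≤ C₁ * N := by
    have h1 : (Ed (-η)) ^ 2 = (Ed η) ^ 2 := by
      rw [hEdsq, hEdsq, map_neg, inner_neg_neg]
    have h2 : (Ed (-η)) ^ 2 ≤ (C₁ * N) ^ 2 := by nlinarith [hEd0 η, hEdinterp]
    nlinarith [hEd0 (-η), mul_nonneg hC₁.le hN0]
  -- bound Ed v
  have hEdv : Ed v ≤ C₁ * E + C₁ ^ 2 * N := by
    have h1 : Ed (e + -η) ≤ C₁ * (Ed e + Ed (-η)) := hsub e (-η)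
    have h2 : e + -η = v := by rw [hev]; abel
    rw [h2] at h1
    nlinarith [hEdneg]
  have hEdv0 : 0 ≤ Ed v := hEd0 v
  -- energy identity splitting
  have hsplit : E ^ 2 = ⟪Lδ e, η⟫ + ⟪Lδ e, v⟫ := by
    rw [hE, hEdsq]
    nth_rewrite 2 [hev]
    rw [inner_add_right]
  have hterm1 : ⟪Lδ e, η⟫ ≤ C₁ * E * N := by rw [hN]; exact hdual η
  have hterm2 : ⟪Lδ e, v⟫ ≤ (C₁ ^ 2 + C₁) * (δ * M) * Ed v := by
    have hg : ⟪Lδ e, v⟫ = ⟪rin, v⟫ + ⟪rbd, v⟫ := by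
      rw [hGal v hvS, inner_add_left]
    have h1 : ⟪rin, v⟫ ≤ (C₁ * δ * M) * (C₁ * Ed v) := by
      calc ⟪rin, v⟫ ≤ ‖rin‖ * ‖v‖ := real_inner_le_norm _ _
        _ ≤ (C₁ * δ * M) * (C₁ * Ed v) := by
            apply mul_le_mul hrin (hL2 v) (norm_nonneg v)
            positivity
    have h2 : ⟪rbd, v⟫ ≤ C₁ * δ * M * Ed v := le_trans (le_abs_self _) (hrbd v hvS)
    rw [hg]; nlinarith
  -- combine into quadratic inequality step by step
  have h5 : E ^ 2 ≤ C₁ * E * N + (C₁ ^ 2 + C₁) * (δ * M) *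
      (C₁ * E + C₁ ^ 2 * N) := by
    have hEv2 : (C₁ ^ 2 + C₁) * (δ * M) * Ed v ≤
        (C₁ ^ 2 + C₁) * (δ * M) * (C₁ * E + C₁ ^ 2 * N) :=
      mul_le_mul_of_nonneg_left hEdv (by positivity)
    linarith [hsplit.le, hterm1, hterm2]
  have hx1 : C₁ * E * N ≤ C₁ ^ 2 * (A * M) * E := by
    calc C₁ * E * N = C₁ * E * N := rfl
      _ ≤ C₁ * E * (C₁ * A * M) :=
          mul_le_mul_of_nonneg_left hNle (mul_nonneg hC₁.le hE0)
      _ = C₁ ^ 2 * (A * M) * E := by ring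
  have hx2 : (C₁ ^ 2 + C₁) * (δ * M) * (C₁ ^ 2 * N) ≤
      (C₁ ^ 5 + C₁ ^ 4) * ((δ * M) * (A * M)) := by
    calc (C₁ ^ 2 + C₁) * (δ * M) * (C₁ ^ 2 * N)
        = ((C₁ ^ 2 + C₁) * (δ * M) * C₁ ^ 2) * N := by ring
      _ ≤ ((C₁ ^ 2 + C₁) * (δ * M) * C₁ ^ 2) * (C₁ * A * M) :=
          mul_le_mul_of_nonneg_left hNle
            (by positivity : (0:ℝ) ≤ (C₁ ^ 2 + C₁) * (δ * M) * C₁ ^ 2)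
      _ ≤ (C₁ ^ 5 + C₁ ^ 4) * ((δ * M) * (A * M)) := by nlinarith [mul_nonneg (mul_nonneg hδ0 hM) (mul_nonneg hA0 hM)]
  have h6 : E ^ 2 ≤ C₁ ^ 2 * (A * M) * E + (C₁ ^ 3 + C₁ ^ 2) * (δ * M) * E
      + (C₁ ^ 5 + C₁ ^ 4) * ((δ * M) * (A * M)) := by nlinarith [h5, hx1, hx2]

  set S : ℝ := (A + δ) * M with hS
  clear_value S
  have hS0 : 0 ≤ S := by rw [hS]; positivity
  have h7 : (δ * M) * (A * M) ≤ S ^ 2 / 4 := by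
    rw [hS]; nlinarith [sq_nonneg ((A - δ) * M)]
  have hAMS : A * M ≤ S := by rw [hS]; nlinarith [mul_nonneg hδ0 hM]
  have hδMS : δ * M ≤ S := by rw [hS]; nlinarith [mul_nonneg hA0 hM]
  have ha : C₁ ^ 2 * (A * M) * E ≤ C₁ ^ 2 * S * E := by
    exact mul_le_mul_of_nonneg_right
      (mul_le_mul_of_nonneg_left hAMS (by positivity : (0:ℝ) ≤ C₁ ^ 2)) hE0
  have hb : (C₁ ^ 3 + C₁ ^ 2) * (δ * M) * E ≤ (C₁ ^ 3 + C₁ ^ 2) * S * E := by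
    exact mul_le_mul_of_nonneg_right
      (mul_le_mul_of_nonneg_left hδMS (by positivity : (0:ℝ) ≤ C₁ ^ 3 + C₁ ^ 2)) hE0
  have hc : (C₁ ^ 5 + C₁ ^ 4) * ((δ * M) * (A * M)) ≤
      ((C₁ ^ 5 + C₁ ^ 4) / 4) * S ^ 2 := by
    have := mul_le_mul_of_nonneg_left h7 (by positivity : (0:ℝ) ≤ C₁ ^ 5 + C₁ ^ 4)
    linarith [this, (by ring : (C₁ ^ 5 + C₁ ^ 4) * (S ^ 2 / 4) = ((C₁ ^ 5 + C₁ ^ 4) / 4) * S ^ 2)]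
  have hquad : E ^ 2 ≤ (C₁ ^ 3 + 2 * C₁ ^ 2) * S * E
      + ((C₁ ^ 5 + C₁ ^ 4) / 4) * S ^ 2 := by nlinarith [h6, ha, hb, hc]
  set K : ℝ := C₁ ^ 3 + 2 * C₁ ^ 2 + (C₁ ^ 5 + C₁ ^ 4) / 4 + 1 with hK
  clear_value K
  have hKpos : (0:ℝ) < K := by rw [hK]; positivity
  have hK1 : 1 ≤ K := by
    rw [hK]
    nlinarith [pow_pos hC₁ 3, pow_pos hC₁ 2, pow_pos hC₁ 5, pow_pos hC₁ 4]
  have hLe : ‖e‖ ≤ C₁ * E := by rw [hE]; exact hL2 e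
  clear hEdsq hGal hrbd hL2 hsub hdual hsplit hterm1 hterm2 hrin hEdneg hEdv
    hEdv0 hEdinterp hinterp hNle hx1 hx2 h5 h6 h7 hAMS hδMS ha hb hc hev hvS
    huh hIhu hEd0 hN0 hη hv he
  have hEbound : E ≤ K * S := by
    by_contra hcon
    push_neg at hcon
    have hSE : S ≤ E := by nlinarith [mul_nonneg (sub_nonneg.mpr hK1) hS0]
    have h9 : S * S ≤ S * E := mul_le_mul_of_nonneg_left hSE hS0
    have h10 : ((C₁ ^ 5 + C₁ ^ 4) / 4) * (S * S) ≤ ((C₁ ^ 5 + C₁ ^ 4) / 4) * (S * E) :=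
      mul_le_mul_of_nonneg_left h9 (by positivity)
    have h11 : E * (K * S) ≤ E * E := mul_le_mul_of_nonneg_left hcon.le hE0
    rw [hK] at h11
    have hSE0 : (0:ℝ) ≤ S * E := mul_nonneg hS0 hE0
    have h12 : S * E ≤ 0 := by nlinarith [hquad, h10, h11]
    have h13 : S * E = 0 := le_antisymm h12 hSE0
    have hEpos : 0 < E := lt_of_le_of_lt (mul_nonneg hKpos.le hS0) hcon
    have hSzero : S = 0 := by
      rcases mul_eq_zero.mp h13 with h' | h'
      · exact h'
      · exact absurd h' hEpos.ne'
    rw [hSzero] at hquad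
    nlinarith [hquad, pow_pos hEpos 2]
  have hconv : (C₁ + 1) * K * S = (C₁ + 1) * K * (A + δ) * M := by
    rw [hS]; ring
  have hKS0 : (0:ℝ) ≤ K * S := mul_nonneg hKpos.le hS0
  have hstep : K * S ≤ (C₁ + 1) * K * S := by
    nlinarith [mul_nonneg (mul_nonneg hC₁.le hKpos.le) hS0]
  constructor
  · linarith [hEbound, hstep, hconv.le, hconv.ge]
  · have h8 : ‖e‖ ≤ C₁ * E := hLe
    have h9 : C₁ * E ≤ C₁ * (K * S) := mul_le_mul_of_nonneg_left hEbound hC₁.le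
    have h10 : C₁ * (K * S) ≤ (C₁ + 1) * K * S := by nlinarith [hKS0]
    linarith [h8, h9, h10, hconv.le, hconv.ge]
end
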